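/- Let L be the directed graph with vertex set {v_1, ..., v_n} and edge set {e_{i,j} : 1 ≤ i ≤ j ≤ n} where e_{i,j} goes from v_i to v_j. Then the map A_L : ℤ^n → ℤ^n given on the i-th basis vector by A_L(v_i) = (Σ_{j=i}^n v_j) − v_i is injective, and its cokernel is isomorphic to ℤ. Consequently K_0 of the corresponding graph C*-algebra (the quantum sphere C(S^{2n-1}_q)) is ℤ and K_1 is ℤ. -/

import Mathlib

/-- For the graph `L_{2n-1}` of the quantum sphere `C(S^{2n-1}_q)`, the map
`A_L : ℤ^n → ℤ^n`, `A_L(v_i) = (Σ_{j=i}^n v_j) − v_i`, has cokernel `ℤ` and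
kernel `ℤ`; by the Cuntz formula `K_0(C(S^{2n-1}_q)) ≅ ℤ` and
`K_1(C(S^{2n-1}_q)) ≅ ℤ`. -/
theorem quantum_sphere_K_theory_map (n : ℕ) (hn : 1 ≤ n)
    (f : (Fin n → ℤ) →ₗ[ℤ] (Fin n → ℤ))
    (hf : ∀ i : Fin n, f (Pi.single i 1) =
      fun j => (if i ≤ j then (1 : ℤ) else 0) - (if i = j then 1 else 0)) :
    Nonempty (((Fin n → ℤ) ⧸ LinearMap.range f) ≃ₗ[ℤ] ℤ) ∧
      Nonempty (LinearMap.ker f ≃ₗ[ℤ] ℤ) := by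
  have key : ∀ (x : Fin n → ℤ) (j : Fin n),
      f x j = ∑ i ∈ Finset.univ.filter (· < j), x i := by
    intro x j
    have hx : x = ∑ i, x i • Pi.single i (1:ℤ) := by
      conv_lhs => rw [← Finset.univ_sum_single x]
      refine Finset.sum_congr rfl fun i _ => ?_
      rw [← Pi.single_smul, smul_eq_mul, mul_one]
    conv_lhs => rw [hx]
    rw [map_sum]
    have h1 : ∀ i : Fin n, (f (x i • Pi.single i (1:ℤ))) j
        = if i < j then x i else 0 := by
      intro i
      rw [map_smul, hf i]
      simp only [Pi.smul_apply, smul_eq_mul]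
      rcases lt_trichotomy i j with h | h | h
      · simp [le_of_lt h, ne_of_lt h, h]
      · simp [h]
      · simp [not_le.2 h, (ne_of_lt h).symm, not_lt.2 (le_of_lt h), h.not_gt]
    rw [Finset.sum_apply]
    simp only [h1]
    rw [Finset.sum_filter]
  set z : Fin n := ⟨0, hn⟩ with hz
  set m : Fin n := ⟨n - 1, by omega⟩ with hm
  constructor
  · -- cokernel
    have hrange : LinearMap.range f = LinearMap.ker (LinearMap.proj z :
        (Fin n → ℤ) →ₗ[ℤ] ℤ) := by
      apply le_antisymm
      · rintro _ ⟨x, rfl⟩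
        simp only [LinearMap.mem_ker, LinearMap.proj_apply]
        rw [key]
        apply Finset.sum_eq_zero
        intro i hi
        simp only [Finset.mem_filter] at hi
        exact absurd hi.2 (by simp [Fin.lt_def, hz])
      · intro x hx
        simp only [LinearMap.mem_ker, LinearMap.proj_apply] at hx
        have hx2 : x = ∑ i, Pi.single i (x i) := (Finset.univ_sum_single x).symm
        rw [hx2]
        apply Submodule.sum_mem
        intro j _
        by_cases hj : j = z
        · rw [hj, hx]
          simp
        · -- single j (x j) = x j • single j 1 ∈ range f
          have hjv : 1 ≤ (j : ℕ) := by
            rcases Nat.eq_zero_or_pos (j : ℕ) with h | h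
            · exact absurd (Fin.ext h : j = z) hj
            · exact h
          set i : Fin n := ⟨(j : ℕ) - 1, by omega⟩ with hi
          have : Pi.single j (x j) = f (x j • Pi.single i 1) - f (x j • Pi.single j 1) := by
            rw [map_smul, map_smul, hf i, hf j]
            funext k
            simp only [Pi.sub_apply, Pi.smul_apply, smul_eq_mul, Pi.single_apply]
            have hiv : (i : ℕ) = (j : ℕ) - 1 := rfl
            simp only [Fin.le_def, Fin.ext_iff, hiv]
            split_ifs <;> first | ring1 | (exfalso; omega)
          rw [this]
          exact Submodule.sub_mem _ (LinearMap.mem_range_self f _)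
            (LinearMap.mem_range_self f _)
    rw [hrange]
    refine ⟨LinearMap.quotKerEquivOfSurjective _ fun c => ?_⟩
    exact ⟨Pi.single z c, by simp⟩
  · -- kernel
    have hker : ∀ x ∈ LinearMap.ker f, ∀ j : Fin n, j ≠ m → x j = 0 := by
      intro x hx j hj
      simp only [LinearMap.mem_ker] at hx
      have hjn : (j : ℕ) + 1 < n := by
        have := j.isLt
        rcases Nat.lt_or_ge ((j:ℕ)+1) n with h | h
        · exact h
        · refine absurd (Fin.ext ?_) hj
          show (j : ℕ) = n - 1
          omega
      set j' : Fin n := ⟨(j : ℕ) + 1, hjn⟩ with hj'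
      have h1 : f x j' = 0 := by rw [hx]; rfl
      have h2 : f x j = 0 := by rw [hx]; rfl
      rw [key] at h1 h2
      have hfil : Finset.univ.filter (· < j')
          = insert j (Finset.univ.filter (· < j)) := by
        ext i
        simp only [Finset.mem_insert, Finset.mem_filter, Finset.mem_univ, true_and,
          Fin.lt_def, Fin.ext_iff, hj', Fin.val_mk]
        omega
      rw [hfil, Finset.sum_insert (by simp)] at h1
      rw [h2] at h1
      linarith
    have hmem : Pi.single m (1:ℤ) ∈ LinearMap.ker f := by
      simp only [LinearMap.mem_ker]
      funext j
      rw [key]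
      apply Finset.sum_eq_zero
      intro i hi
      simp only [Finset.mem_filter, Finset.mem_univ, true_and, Fin.lt_def] at hi
      rw [Pi.single_apply]
      have : i ≠ m := by
        intro h; rw [h] at hi; simp only [hm] at hi
        have := j.isLt; omega
      simp [this]
    refine ⟨?_⟩
    refine LinearEquiv.symm ?_
    refine LinearEquiv.ofBijective
      (LinearMap.codRestrict (LinearMap.ker f)
        (LinearMap.toSpanSingleton ℤ (Fin n → ℤ) (Pi.single m 1))
        (fun c => by
          simp only [LinearMap.toSpanSingleton_apply]
          exact Submodule.smul_mem _ _ hmem)) ⟨?_, ?_⟩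
    · intro a b hab
      have := congrArg (fun y : LinearMap.ker f => (y : Fin n → ℤ) m) hab
      simp only [LinearMap.codRestrict_apply, LinearMap.toSpanSingleton_apply,
        Pi.smul_apply, Pi.single_eq_same, smul_eq_mul, mul_one] at this
      exact this
    · rintro ⟨x, hx⟩
      refine ⟨x m, ?_⟩
      apply Subtype.ext
      simp only [LinearMap.codRestrict_apply, LinearMap.toSpanSingleton_apply]
      funext j
      by_cases hj : j = m
      · subst hj; simp
      · rw [hker x hx j hj]
        simp [Pi.single_apply, hj, Ne.symm hj]
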